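/- For every positive integer m, Σ_{n=0}^{m} C(2m, 2n) · B_{2n} · (2 - 2^{2n}) / (2n - 2m - 1) = 0, where C(2m, 2n) is the binomial coefficient. -/

import Mathlib

/-!
With `B(t) = t / (eᵗ - 1)` and `B'(t) = t eᵗ / (eᵗ - 1)` the exponential generating functions of
`bernoulli` and `bernoulli'`, multiplying by `e²ᵗ - 1` shows `(2 B(t) - B(2t)) eᵗ = B'(2t)`.
Comparing coefficients of `t^(2m+1)`, where `bernoulli' (2m+1) = 0`, gives
`∑ᵢ C(2m+1, i) (2 - 2ⁱ) Bᵢ = 0`; the odd `i` contribute nothing, and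
`C(2m, 2n) / (2n - 2m - 1) = -C(2m+1, 2n) / (2m+1)`.
-/

open Finset Nat

open PowerSeries in
theorem coeff_mk_div_factorial_mul_exp (a : ℕ → ℚ) (n : ℕ) :
    coeff n (mk (fun i => a i / i !) * exp ℚ) = (∑ i ∈ range (n + 1), n.choose i * a i) / n ! := by
  rw [coeff_mul, Nat.sum_antidiagonal_eq_sum_range_succ_mk, sum_div]
  refine sum_congr rfl fun i hi => ?_
  have hin : i ≤ n := Nat.lt_succ_iff.mp (mem_range.mp hi)
  rw [coeff_mk, coeff_exp, Nat.cast_choose ℚ hin]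
  have hfact : ((n - i)! : ℚ) ≠ 0 := mod_cast factorial_ne_zero _
  simp [field]

open PowerSeries in
theorem mk_two_sub_two_pow_mul_bernoulli_mul_exp :
    mk (fun i => (2 - 2 ^ i) * bernoulli i / i !) * exp ℚ =
      rescale 2 (bernoulli'PowerSeries ℚ) := by
  have hF : mk (fun i => (2 - 2 ^ i) * bernoulli i / i !) =
      2 * bernoulliPowerSeries ℚ - rescale 2 (bernoulliPowerSeries ℚ) := by
    ext i
    rw [← map_ofNat C 2, map_sub, coeff_C_mul, coeff_rescale]
    simp only [bernoulliPowerSeries, coeff_mk, Algebra.algebraMap_self, RingHom.id_apply]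
    ring
  have hE2 : exp ℚ ^ 2 = rescale 2 (exp ℚ) := by
    simpa using exp_pow_eq_rescale_exp (A := ℚ) 2
  have hres : rescale (2 : ℚ) (exp ℚ - 1) = exp ℚ ^ 2 - 1 := by
    rw [map_sub, map_one, hE2]
  have hne : exp ℚ ^ 2 - 1 ≠ 0 := by
    intro h
    simpa [hE2, coeff_rescale, coeff_exp] using congrArg (coeff 1) h
  have hB : bernoulliPowerSeries ℚ * (exp ℚ ^ 2 - 1) = X * (exp ℚ + 1) := by
    rw [show exp ℚ ^ 2 - 1 = (exp ℚ - 1) * (exp ℚ + 1) by ring, ← mul_assoc,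
      bernoulliPowerSeries_mul_exp_sub_one]
  have hB2 : rescale 2 (bernoulliPowerSeries ℚ) * (exp ℚ ^ 2 - 1) = 2 * X := by
    rw [← hres, ← map_mul, bernoulliPowerSeries_mul_exp_sub_one, rescale_X, map_ofNat]
  have hB'2 : rescale 2 (bernoulli'PowerSeries ℚ) * (exp ℚ ^ 2 - 1) = 2 * X * exp ℚ ^ 2 := by
    rw [← hres, ← map_mul, bernoulli'PowerSeries_mul_exp_sub_one, map_mul, rescale_X, map_ofNat,
      hE2]
  refine mul_right_cancel₀ hne ?_
  rw [hF, hB'2]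
  linear_combination (2 * exp ℚ) * hB - exp ℚ * hB2

theorem sum_choose_mul_two_sub_two_pow_mul_bernoulli (n : ℕ) :
    ∑ i ∈ range (n + 1), (n.choose i : ℚ) * ((2 - 2 ^ i) * bernoulli i) = 2 ^ n * bernoulli' n := by
  have h := congrArg (PowerSeries.coeff n) mk_two_sub_two_pow_mul_bernoulli_mul_exp
  rw [coeff_mk_div_factorial_mul_exp (fun i => (2 - 2 ^ i) * bernoulli i),
    PowerSeries.coeff_rescale, bernoulli'PowerSeries, PowerSeries.coeff_mk,
    Algebra.algebraMap_self, RingHom.id_apply, ← mul_div_assoc] at h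
  exact (div_left_inj' (mod_cast factorial_ne_zero n)).mp h

theorem sum_range_two_mul {M : Type*} [AddCommMonoid M] (f : ℕ → M) (k : ℕ) :
    ∑ i ∈ range (2 * k), f i = ∑ n ∈ range k, (f (2 * n) + f (2 * n + 1)) := by
  induction k with
  | zero => simp
  | succ k ih => rw [mul_add_one, sum_range_succ, sum_range_succ, sum_range_succ, ih, add_assoc]

theorem two_sub_two_pow_mul_bernoulli_two_mul_add_one (n : ℕ) :
    (2 - 2 ^ (2 * n + 1)) * bernoulli (2 * n + 1) = 0 := by
  rcases Nat.eq_zero_or_pos n with rfl | hn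
  · norm_num
  · rw [bernoulli_eq_zero_of_odd (odd_two_mul_add_one n) (by omega), mul_zero]

theorem sum_choose_two_mul_mul_two_sub_two_pow_mul_bernoulli {m : ℕ} (hm : 0 < m) :
    ∑ n ∈ range (m + 1), ((2 * m + 1).choose (2 * n) : ℚ) *
      ((2 - 2 ^ (2 * n)) * bernoulli (2 * n)) = 0 := by
  have h := sum_choose_mul_two_sub_two_pow_mul_bernoulli (2 * m + 1)
  rw [bernoulli'_eq_zero_of_odd (odd_two_mul_add_one m) (by omega), mul_zero,
    show 2 * m + 1 + 1 = 2 * (m + 1) by ring, sum_range_two_mul] at h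
  simpa only [two_sub_two_pow_mul_bernoulli_two_mul_add_one, mul_zero, add_zero] using h

theorem choose_div_sub_sub_one {n k : ℕ} (hk : k ≤ n) :
    (n.choose k : ℚ) / (k - n - 1) = -1 / (n + 1) * (n + 1).choose k := by
  have hcast : ((n + 1 - k : ℕ) : ℚ) = n + 1 - k := by
    push_cast [Nat.cast_sub (by omega : k ≤ n + 1)]; ring
  have hne : (k : ℚ) - n - 1 ≠ 0 := by
    have : (k : ℚ) ≤ n := mod_cast hk
    linarith
  rw [div_eq_iff hne]
  have h' : (n.choose k : ℚ) * (n + 1) = (n + 1).choose k * (n + 1 - k) := by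
    rw [← hcast]; exact_mod_cast choose_mul_succ_eq n k
  field_simp
  linear_combination h'

/-- For every positive integer `m`,
`Σ_{n=0}^{m} C(2m, 2n) B_{2n} (2 - 2^(2n)) / (2n - 2m - 1) = 0`. -/
theorem stmt_4 (m : ℕ) (hm : 0 < m) :
    ∑ n ∈ Finset.range (m + 1),
      (Nat.choose (2 * m) (2 * n) : ℚ) * bernoulli (2 * n) * (2 - (2 : ℚ) ^ (2 * n)) /
        ((2 * (n : ℤ) - 2 * m - 1 : ℤ) : ℚ) = 0 := by
  calc _ = ∑ n ∈ range (m + 1), -1 / (2 * m + 1) * (((2 * m + 1).choose (2 * n) : ℚ) *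
        ((2 - 2 ^ (2 * n)) * bernoulli (2 * n))) := by
        refine sum_congr rfl fun n hn => ?_
        have hle : 2 * n ≤ 2 * m := by have := mem_range.mp hn; omega
        have h := choose_div_sub_sub_one hle
        push_cast at h ⊢
        linear_combination ((2 - 2 ^ (2 * n)) * bernoulli (2 * n)) * h
    _ = 0 := by rw [← mul_sum, sum_choose_two_mul_mul_two_sub_two_pow_mul_bernoulli hm, mul_zero]
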